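/- Let X be a Hausdorff topological space admitting a pair-network ⋃_{n∈ℕ} 𝒫_n such that (i) for every n, the family 𝒫_n′|_{X^d} consists of sets closed in X^d and is locally finite in X^d, and (ii) for every x ∈ U with U open in X, there exists m with x ∈ st°(x, 𝒫_m) ⊆ U. Then X is developable at non-isolated points. -/

import Mathlib

open Set Topology Filter Function

/-- `st(x, 𝒰) = ⋃ {P ∈ 𝒰 : x ∈ P}`. -/
def stpt {X : Type*} (x : X) (𝒰 : Set (Set X)) : Set X := ⋃₀ {P ∈ 𝒰 | x ∈ P}

/-- The set `X^d` of non-isolated points of `X`. -/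
def nonIsolatedPoints (X : Type*) [TopologicalSpace X] : Set X :=
  {x : X | ¬IsOpen ({x} : Set X)}

/-- A development at non-isolated points: a sequence of open covers of `X` such that
the stars at each non-isolated point form a neighborhood base there. -/
def IsDevelopmentAtNonIsolatedPoints {X : Type*} [TopologicalSpace X]
    (𝒰 : ℕ → Set (Set X)) : Prop :=
  (∀ n, ∀ P ∈ 𝒰 n, IsOpen P) ∧ (∀ n, ⋃₀ 𝒰 n = Set.univ) ∧
    ∀ x ∈ nonIsolatedPoints X, ∀ U : Set X, x ∈ U → IsOpen U →
      ∃ n, stpt x (𝒰 n) ⊆ U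

/-- A quasi-development for `X`. -/
def IsQuasiDevelopment {X : Type*} [TopologicalSpace X] (𝒰 : ℕ → Set (Set X)) : Prop :=
  (∀ n, ∀ P ∈ 𝒰 n, IsOpen P) ∧
    ∀ (x : X) (U : Set X), x ∈ U → IsOpen U →
      ∃ n, x ∈ stpt x (𝒰 n) ∧ stpt x (𝒰 n) ⊆ U

/-- A `g`-function for `X`. -/
def IsGFunction {X : Type*} [TopologicalSpace X] (g : ℕ → X → Set X) : Prop :=
  (∀ n x, IsOpen (g n x)) ∧ (∀ n x, x ∈ g n x) ∧ ∀ n x, g (n + 1) x ⊆ g n x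

/-- `st(x, 𝒰)` for a pair-family `𝒰`. -/
def pairSt {X : Type*} (x : X) (𝒰 : Set (Set X × Set X)) : Set X :=
  ⋃₀ {S | ∃ P ∈ 𝒰, x ∈ P.1 ∧ S = P.2}

/-- `st(A, 𝒰)` for a pair-family `𝒰`. -/
def pairStSet {X : Type*} (A : Set X) (𝒰 : Set (Set X × Set X)) : Set X :=
  ⋃₀ {S | ∃ P ∈ 𝒰, (A ∩ P.1).Nonempty ∧ S = P.2}

/-- A pair-network for `X`. -/
def IsPairNetwork {X : Type*} [TopologicalSpace X] (𝒰 : Set (Set X × Set X)) : Prop :=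
  (∀ P ∈ 𝒰, P.1 ⊆ P.2) ∧
    ∀ (x : X) (U : Set X), x ∈ U → IsOpen U → ∃ P ∈ 𝒰, x ∈ P.1 ∧ P.2 ⊆ U

/-- `𝒰′|_D = {P′ ∩ D : P ∈ 𝒰}`. -/
def firstCoordRestrict {X : Type*} (𝒰 : Set (Set X × Set X)) (D : Set X) : Set (Set X) :=
  (fun P : Set X × Set X => P.1 ∩ D) '' 𝒰

/-- A family of subsets of `X` consists of sets closed in the subspace `D` and is
locally finite in the subspace `D`. -/
def IsClosedLocallyFiniteIn {X : Type*} [TopologicalSpace X]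
    (ℱ : Set (Set X)) (D : Set X) : Prop :=
  (∀ S ∈ ℱ, IsClosed {z : ↥D | (z : X) ∈ S}) ∧
    ∀ z : ↥D, ∃ V : Set X, IsOpen V ∧ (z : X) ∈ V ∧ {S ∈ ℱ | (S ∩ V).Nonempty}.Finite

/-- `ℐ_Δ(X) = {({x}, {x}) : x isolated in X}`. -/
def pairDiag (X : Type*) [TopologicalSpace X] : Set (Set X × Set X) :=
  {P | ∃ x : X, IsOpen ({x} : Set X) ∧ P = (({x} : Set X), ({x} : Set X))}

/-!
The `n`-th cover consists of the isolated singletons and, for each `y ∈ X^d`, the set `Q_n(y)` of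
points `z` such that for every `i ≤ n` each member of `𝒰ᵢ′|_{X^d}` containing `z` contains `y`,
cut down by those `st°(y, 𝒰ᵢ)` that contain `y`. It is open because the points that lie in some
member of `𝒰ᵢ′|_{X^d}` avoiding `y` form a locally finite union of closed sets.

Given `x ∈ X^d` and `U`, choose `m` with `x ∈ st°(x, 𝒰_m) ⊆ U` and a pair `P ∈ 𝒰_k` with
`x ∈ P′ ⊆ P″ ⊆ st°(x, 𝒰_m)` such that every member of `𝒰_m′|_{X^d}` meeting `P′` contains `x`.
If `x ∈ Q_n(y)` with `n ≥ k, m`, then `y ∈ P′`, so `x` and `y` lie in the same members of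
`𝒰_m′|_{X^d}`; hence `st(y, 𝒰_m) = st(x, 𝒰_m)` and `Q_n(y) ⊆ st°(x, 𝒰_m) ⊆ U`.
-/

section PairNetworkDevelopment

variable {X : Type*}

def unionNotContaining (ℱ : Set (Set X)) (y : X) : Set X := ⋃₀ {S ∈ ℱ | y ∉ S}

theorem notMem_unionNotContaining_iff {ℱ : Set (Set X)} {x y : X} :
    x ∉ unionNotContaining ℱ y ↔ ∀ S ∈ ℱ, x ∈ S → y ∈ S := by
  simp only [unionNotContaining, mem_sUnion, mem_sep_iff, not_exists, not_and, and_imp]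
  exact forall_congr' fun S => ⟨fun h hS hx => not_not.mp fun hy => h hS hy hx,
    fun h hS hy hx => hy (h hS hx)⟩

theorem notMem_unionNotContaining_self {ℱ : Set (Set X)} {y : X} :
    y ∉ unionNotContaining ℱ y :=
  notMem_unionNotContaining_iff.mpr fun _ _ hy => hy

theorem subset_of_mem_firstCoordRestrict {𝒱 : Set (Set X × Set X)} {D S : Set X}
    (hS : S ∈ firstCoordRestrict 𝒱 D) : S ⊆ D := by
  obtain ⟨P, -, rfl⟩ := hS
  exact inter_subset_right

theorem pairSt_subset_pairSt {𝒱 : Set (Set X × Set X)} {x y : X}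
    (h : ∀ P ∈ 𝒱, x ∈ P.1 → y ∈ P.1) : pairSt x 𝒱 ⊆ pairSt y 𝒱 := by
  rintro z ⟨-, ⟨P, hP, hxP, rfl⟩, hz⟩
  exact ⟨P.2, ⟨P, hP, h P hP hxP, rfl⟩, hz⟩

theorem mem_fst_of_notMem_unionNotContaining {𝒱 : Set (Set X × Set X)} {D : Set X}
    {x y : X} (hx : x ∈ D) (hxy : x ∉ unionNotContaining (firstCoordRestrict 𝒱 D) y)
    {P : Set X × Set X} (hP : P ∈ 𝒱) (hxP : x ∈ P.1) : y ∈ P.1 :=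
  (notMem_unionNotContaining_iff.mp hxy _ ⟨P, hP, rfl⟩ ⟨hxP, hx⟩).1

theorem pairSt_subset_of_notMem_unionNotContaining {𝒱 : Set (Set X × Set X)} {D : Set X}
    {x y : X} (hx : x ∈ D) (hxy : x ∉ unionNotContaining (firstCoordRestrict 𝒱 D) y) :
    pairSt x 𝒱 ⊆ pairSt y 𝒱 :=
  pairSt_subset_pairSt fun _ hP hxP => mem_fst_of_notMem_unionNotContaining hx hxy hP hxP

variable [TopologicalSpace X]

theorem isClosed_nonIsolatedPoints : IsClosed (nonIsolatedPoints X) := by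
  refine isOpen_compl_iff.mp (isOpen_iff_forall_mem_open.mpr fun x hx => ?_)
  have hx : IsOpen ({x} : Set X) := not_not.mp hx
  exact ⟨{x}, fun y hy => by rwa [mem_singleton_iff.mp hy, mem_compl_iff, nonIsolatedPoints,
    mem_ofPred_eq, not_not], hx, rfl⟩

namespace IsClosedLocallyFiniteIn

variable {ℱ : Set (Set X)} {D : Set X}

theorem isClosed (h : IsClosedLocallyFiniteIn ℱ D) (hD : IsClosed D) {S : Set X}
    (hS : S ∈ ℱ) (hSD : S ⊆ D) : IsClosed S := by
  have : IsClosed (((↑) : D → X) '' ((↑) ⁻¹' S)) := (h.1 S hS).trans hD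
  rwa [Subtype.image_preimage_coe, inter_eq_right.mpr hSD] at this

/-- Outside the closed set `D` the complement of `D` meets no member of `ℱ`. -/
theorem locallyFinite (h : IsClosedLocallyFiniteIn ℱ D) (hD : IsClosed D)
    (hℱD : ∀ S ∈ ℱ, S ⊆ D) : LocallyFinite ((↑) : ℱ → Set X) := by
  intro x
  by_cases hx : x ∈ D
  · obtain ⟨V, hVo, hxV, hfin⟩ := h.2 ⟨x, hx⟩
    exact ⟨V, hVo.mem_nhds hxV,
      (hfin.preimage Subtype.val_injective.injOn).subset fun S hS => ⟨S.2, hS⟩⟩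
  · refine ⟨Dᶜ, hD.isOpen_compl.mem_nhds hx, (finite_empty).subset ?_⟩
    rintro S ⟨z, hzS, hzD⟩
    exact hzD (hℱD S S.2 hzS)

end IsClosedLocallyFiniteIn

theorem isClosed_unionNotContaining {ℱ : Set (Set X)} (hℱ : LocallyFinite ((↑) : ℱ → Set X))
    (hcl : ∀ S ∈ ℱ, IsClosed S) (y : X) : IsClosed (unionNotContaining ℱ y) := by
  rw [unionNotContaining, sUnion_eq_iUnion]
  exact (hℱ.comp_injective (inclusion_injective fun _ hS => hS.1)).isClosed_iUnion
    fun S => hcl S S.2.1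

theorem isClosed_unionNotContaining_nonIsolatedPoints {𝒱 : Set (Set X × Set X)}
    (h𝒱 : IsClosedLocallyFiniteIn (firstCoordRestrict 𝒱 (nonIsolatedPoints X))
      (nonIsolatedPoints X)) (y : X) :
    IsClosed (unionNotContaining (firstCoordRestrict 𝒱 (nonIsolatedPoints X)) y) :=
  isClosed_unionNotContaining
    (h𝒱.locallyFinite isClosed_nonIsolatedPoints fun _ => subset_of_mem_firstCoordRestrict)
    (fun _ hS => h𝒱.isClosed isClosed_nonIsolatedPoints hS
      (subset_of_mem_firstCoordRestrict hS)) y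

def devCell (𝒰 : ℕ → Set (Set X × Set X)) (n : ℕ) (y : X) : Set X :=
  ⋂ i ∈ Iic n, (unionNotContaining (firstCoordRestrict (𝒰 i) (nonIsolatedPoints X)) y)ᶜ ∩
    ⋂ (_ : y ∈ interior (pairSt y (𝒰 i))), interior (pairSt y (𝒰 i))

def devCover (𝒰 : ℕ → Set (Set X × Set X)) (n : ℕ) : Set (Set X) :=
  devCell 𝒰 n '' nonIsolatedPoints X ∪ singleton '' (nonIsolatedPoints X)ᶜ

section devCell

variable {𝒰 : ℕ → Set (Set X × Set X)} {n i : ℕ} {y : X}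

theorem isOpen_devCell (h𝒰 : ∀ i, IsClosedLocallyFiniteIn
    (firstCoordRestrict (𝒰 i) (nonIsolatedPoints X)) (nonIsolatedPoints X)) :
    IsOpen (devCell 𝒰 n y) :=
  (finite_Iic n).isOpen_biInter fun i _ =>
    (isClosed_unionNotContaining_nonIsolatedPoints (h𝒰 i) y).isOpen_compl.inter
      (isOpen_iInter_of_finite fun _ => isOpen_interior)

theorem mem_devCell_self : y ∈ devCell 𝒰 n y :=
  mem_iInter₂.mpr fun _ _ => ⟨notMem_unionNotContaining_self, mem_iInter.mpr id⟩

theorem devCell_subset_compl_unionNotContaining (hi : i ≤ n) :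
    devCell 𝒰 n y ⊆ (unionNotContaining (firstCoordRestrict (𝒰 i) (nonIsolatedPoints X)) y)ᶜ :=
  fun _ hx => (mem_iInter₂.mp hx i hi).1

theorem devCell_subset_interior_pairSt (hi : i ≤ n) (hy : y ∈ interior (pairSt y (𝒰 i))) :
    devCell 𝒰 n y ⊆ interior (pairSt y (𝒰 i)) :=
  fun _ hx => mem_iInter.mp (mem_iInter₂.mp hx i hi).2 hy

end devCell

theorem isOpen_of_mem_devCover {𝒰 : ℕ → Set (Set X × Set X)} {n : ℕ} (h𝒰 : ∀ i,
    IsClosedLocallyFiniteIn (firstCoordRestrict (𝒰 i) (nonIsolatedPoints X)) (nonIsolatedPoints X))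
    {Q : Set X} (hQ : Q ∈ devCover 𝒰 n) : IsOpen Q := by
  rcases hQ with ⟨y, -, rfl⟩ | ⟨z, hz, rfl⟩
  · exact isOpen_devCell h𝒰
  · exact not_not.mp hz

theorem sUnion_devCover (𝒰 : ℕ → Set (Set X × Set X)) (n : ℕ) : ⋃₀ devCover 𝒰 n = univ := by
  refine eq_univ_of_forall fun x => ?_
  by_cases hx : x ∈ nonIsolatedPoints X
  · exact ⟨devCell 𝒰 n x, Or.inl (mem_image_of_mem _ hx), mem_devCell_self⟩
  · exact ⟨{x}, Or.inr (mem_image_of_mem _ hx), rfl⟩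

theorem devCell_subset_interior_pairSt_of_mem {𝒰 : ℕ → Set (Set X × Set X)} {k m n : ℕ}
    (hk : k ≤ n) (hm : m ≤ n) {x y : X} (hx : x ∈ nonIsolatedPoints X)
    (hy : y ∈ nonIsolatedPoints X) {P : Set X × Set X} (hP : P ∈ 𝒰 k) (hxP : x ∈ P.1)
    (hPW : P.1 ⊆ interior (pairSt x (𝒰 m)) \
      unionNotContaining (firstCoordRestrict (𝒰 m) (nonIsolatedPoints X)) x)
    (hxy : x ∈ devCell 𝒰 n y) : devCell 𝒰 n y ⊆ interior (pairSt x (𝒰 m)) := by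
  have hyP : y ∈ P.1 :=
    mem_fst_of_notMem_unionNotContaining hx (devCell_subset_compl_unionNotContaining hk hxy) hP hxP
  obtain ⟨hy_int, hy_sees⟩ := hPW hyP
  have hst : pairSt y (𝒰 m) = pairSt x (𝒰 m) :=
    (pairSt_subset_of_notMem_unionNotContaining hy hy_sees).antisymm
      (pairSt_subset_of_notMem_unionNotContaining hx
        (devCell_subset_compl_unionNotContaining hm hxy))
  rw [← hst] at hy_int ⊢
  exact devCell_subset_interior_pairSt hm hy_int

theorem exists_stpt_devCover_subset {𝒰 : ℕ → Set (Set X × Set X)}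
    (hnet : IsPairNetwork (⋃ n, 𝒰 n)) (h𝒰 : ∀ i,
    IsClosedLocallyFiniteIn (firstCoordRestrict (𝒰 i) (nonIsolatedPoints X)) (nonIsolatedPoints X))
    {x : X} (hx : x ∈ nonIsolatedPoints X) {m : ℕ} (hxm : x ∈ interior (pairSt x (𝒰 m))) :
    ∃ n, stpt x (devCover 𝒰 n) ⊆ interior (pairSt x (𝒰 m)) := by
  obtain ⟨P, hP, hxP, hPW⟩ := hnet.2 x (interior (pairSt x (𝒰 m)) \
    unionNotContaining (firstCoordRestrict (𝒰 m) (nonIsolatedPoints X)) x)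
    ⟨hxm, notMem_unionNotContaining_self⟩
    (isOpen_interior.sdiff (isClosed_unionNotContaining_nonIsolatedPoints (h𝒰 m) x))
  obtain ⟨k, hPk⟩ := mem_iUnion.mp hP
  refine ⟨max k m, ?_⟩
  rintro z ⟨Q, ⟨⟨y, hy, rfl⟩ | ⟨w, hw, rfl⟩, hxQ⟩, hzQ⟩
  · exact devCell_subset_interior_pairSt_of_mem (le_max_left k m) (le_max_right k m) hx hy hPk
      hxP ((hnet.1 P hP).trans hPW) hxQ hzQ
  · exact absurd hx (mem_singleton_iff.mp hxQ ▸ hw)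

end PairNetworkDevelopment

theorem theorem_2_3_3_implies_1_general {X : Type*} [TopologicalSpace X]
    (𝒰 : ℕ → Set (Set X × Set X))
    (hnet : IsPairNetwork (⋃ n, 𝒰 n))
    (hclf : ∀ n, IsClosedLocallyFiniteIn
      (firstCoordRestrict (𝒰 n) (nonIsolatedPoints X)) (nonIsolatedPoints X))
    (hst : ∀ (x : X) (U : Set X), x ∈ U → IsOpen U →
      ∃ m, x ∈ interior (pairSt x (𝒰 m)) ∧ interior (pairSt x (𝒰 m)) ⊆ U) :
    ∃ 𝒬 : ℕ → Set (Set X), IsDevelopmentAtNonIsolatedPoints 𝒬 := by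
  refine ⟨devCover 𝒰, fun n _ hQ => isOpen_of_mem_devCover hclf hQ, sUnion_devCover 𝒰,
    fun x hx U hxU hU => ?_⟩
  obtain ⟨m, hxm, hmU⟩ := hst x U hxU hU
  obtain ⟨n, hn⟩ := exists_stpt_devCover_subset hnet hclf hx hxm
  exact ⟨n, hn.trans hmU⟩

/-- Theorem 2.3, (3) ⇒ (1). -/
theorem theorem_2_3_3_implies_1 {X : Type*} [TopologicalSpace X] [T2Space X]
    (𝒰 : ℕ → Set (Set X × Set X))
    (hnet : IsPairNetwork (⋃ n, 𝒰 n))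
    (hclf : ∀ n, IsClosedLocallyFiniteIn
      (firstCoordRestrict (𝒰 n) (nonIsolatedPoints X)) (nonIsolatedPoints X))
    (hst : ∀ (x : X) (U : Set X), x ∈ U → IsOpen U →
      ∃ m, x ∈ interior (pairSt x (𝒰 m)) ∧ interior (pairSt x (𝒰 m)) ⊆ U) :
    ∃ 𝒬 : ℕ → Set (Set X), IsDevelopmentAtNonIsolatedPoints 𝒬 :=
  theorem_2_3_3_implies_1_general 𝒰 hnet hclf hst
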